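/- arXiv:2512.11777 — 3 statements merged into one kernel-verified Lean document; each statement's English description precedes it below -/
import Mathlib

section
/- Let Q = Z B Zᵀ ∈ [0,1]^{N×N} with rank(B) = d ≤ K, and Q̃ = QQ. Then: (i) σ₁(Q̃) ≤ N²; (ii) σ_{d+1}(Q̃) = 0; and (iii) σ_d(Q̃) ≥ N π̃ λ_d(B̃), so in particular σ_d(Q̃) ≥ π̃ b̃ N² when λ_d(B̃) = b̃N. -/
/-!
Since `ZᵀZ = D_n`, one has `Q̃ = Z B̃ Zᵀ`. The entries of `Q̃` lie in `[0, N]`, so its Frobenius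
norm, and with it `σ₁(Q̃)`, is at most `N²`; and `rank Q̃ ≤ rank B = d` forces `σ_{d+1}(Q̃) = 0`.
For the lower bound apply Courant–Fischer to `Q̃ Q̃ᵀ`: if `u` runs over the span `V` of the top `d`
left singular vectors of `B̃`, then `x = Z D_n⁻¹ u` satisfies `Q̃ᵀ x = Z B̃ᵀ u`, while
`‖Z v‖² ≥ N π̃ ‖v‖²` and `N π̃ ‖x‖² ≤ ‖u‖²`. Hence `‖Q̃ᵀ x‖ ≥ N π̃ σ_d(B̃) ‖x‖` on the
`d`-dimensional space `Z D_n⁻¹ V`.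
-/

open Matrix Finset

/-- `sv M j` is the `j`-th largest singular value (1-indexed) of the square real matrix `M`,
i.e. the square root of the `j`-th largest eigenvalue of `M Mᴴ`. -/
noncomputable def sv {n : ℕ} (M : Matrix (Fin n) (Fin n) ℝ) (j : ℕ) : ℝ :=
  if h : 1 ≤ j ∧ j ≤ n then
    Real.sqrt ((Matrix.isHermitian_mul_conjTranspose_self M).eigenvalues
      (Tuple.sort (Matrix.isHermitian_mul_conjTranspose_self M).eigenvalues ⟨n - j, by omega⟩))
  else 0

open scoped RealInnerProductSpace

namespace Matrix.IsHermitian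

variable {m : ℕ} {A : Matrix (Fin m) (Fin m) ℝ} (hA : A.IsHermitian)

lemma toEuclideanLin_eigenvectorBasis (i : Fin m) :
    toEuclideanLin A (hA.eigenvectorBasis i) = hA.eigenvalues i • hA.eigenvectorBasis i := by
  ext1
  simp [hA.mulVec_eigenvectorBasis]

lemma inner_toEuclideanLin_self (x : EuclideanSpace ℝ (Fin m)) :
    ⟪x, toEuclideanLin A x⟫ = ∑ i, hA.eigenvalues i * ⟪hA.eigenvectorBasis i, x⟫ ^ 2 := by
  rw [← hA.eigenvectorBasis.sum_inner_mul_inner]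
  refine Finset.sum_congr rfl fun i _ => ?_
  rw [← (isSymmetric_toEuclideanLin_iff.mpr hA), toEuclideanLin_eigenvectorBasis,
    real_inner_smul_left, real_inner_comm x]
  ring

lemma inner_eigenvectorBasis_eq_zero_of_mem_span {S : Finset (Fin m)}
    {x : EuclideanSpace ℝ (Fin m)} (hx : x ∈ Submodule.span ℝ (hA.eigenvectorBasis '' S))
    {j : Fin m} (hj : j ∉ S) :
    ⟪hA.eigenvectorBasis j, x⟫ = 0 := by
  induction hx using Submodule.span_induction with
  | mem y hy =>
    obtain ⟨i, hi, rfl⟩ := hy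
    exact hA.eigenvectorBasis.orthonormal.2 fun h => hj (h ▸ hi)
  | zero => simp
  | add y z _ _ hy hz => rw [inner_add_right, hy, hz, add_zero]
  | smul c y _ hy => rw [real_inner_smul_right, hy, mul_zero]

lemma finrank_span_eigenvectorBasis_image (S : Finset (Fin m)) :
    Module.finrank ℝ (Submodule.span ℝ (hA.eigenvectorBasis '' S)) = S.card := by
  have hli : LinearIndepOn ℝ id
      (↑(S.image hA.eigenvectorBasis) : Set (EuclideanSpace ℝ (Fin m))) := by
    rw [coe_image]
    exact (hA.eigenvectorBasis.orthonormal.linearIndependent.linearIndepOn _).id_image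
  rw [← coe_image, finrank_span_finset_eq_card hli,
    card_image_of_injective _ hA.eigenvectorBasis.orthonormal.linearIndependent.injective]

lemma inner_toEuclideanLin_self_le_of_mem_span {S : Finset (Fin m)} {c : ℝ}
    (hc : ∀ i ∈ S, hA.eigenvalues i ≤ c) {x : EuclideanSpace ℝ (Fin m)}
    (hx : x ∈ Submodule.span ℝ (hA.eigenvectorBasis '' S)) :
    ⟪x, toEuclideanLin A x⟫ ≤ c * ‖x‖ ^ 2 := by
  rw [inner_toEuclideanLin_self, ← hA.eigenvectorBasis.sum_sq_inner_right, mul_sum]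
  refine sum_le_sum fun i _ => ?_
  by_cases hi : i ∈ S
  · exact mul_le_mul_of_nonneg_right (hc i hi) (sq_nonneg _)
  · simp [hA.inner_eigenvectorBasis_eq_zero_of_mem_span hx hi]

lemma mul_norm_sq_le_inner_toEuclideanLin_self_of_mem_span {S : Finset (Fin m)} {c : ℝ}
    (hc : ∀ i ∈ S, c ≤ hA.eigenvalues i) {x : EuclideanSpace ℝ (Fin m)}
    (hx : x ∈ Submodule.span ℝ (hA.eigenvectorBasis '' S)) :
    c * ‖x‖ ^ 2 ≤ ⟪x, toEuclideanLin A x⟫ := by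
  rw [inner_toEuclideanLin_self, ← hA.eigenvectorBasis.sum_sq_inner_right, mul_sum]
  refine sum_le_sum fun i _ => ?_
  by_cases hi : i ∈ S
  · exact mul_le_mul_of_nonneg_right (hc i hi) (sq_nonneg _)
  · simp [hA.inner_eigenvectorBasis_eq_zero_of_mem_span hx hi]

-- Courant–Fischer; `Tuple.sort hA.eigenvalues ⟨m - j, _⟩` indexes the `j`-th largest eigenvalue.
lemma le_eigenvalues_sort_of_forall_mem {j : ℕ} (hj1 : 1 ≤ j) (hjm : j ≤ m) {s : ℝ}
    {V : Submodule ℝ (EuclideanSpace ℝ (Fin m))} (hV : j ≤ Module.finrank ℝ V)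
    (hs : ∀ x ∈ V, s * ‖x‖ ^ 2 ≤ ⟪x, toEuclideanLin A x⟫) :
    s ≤ hA.eigenvalues (Tuple.sort hA.eigenvalues ⟨m - j, by omega⟩) := by
  set σ := Tuple.sort hA.eigenvalues
  set W := Submodule.span ℝ (hA.eigenvectorBasis '' (Iic (⟨m - j, by omega⟩ : Fin m)).image σ)
  have hW : Module.finrank ℝ W = m - j + 1 := by
    rw [finrank_span_eigenvectorBasis_image, card_image_of_injective _ σ.injective, Fin.card_Iic]
  -- `W` and `V` have dimensions adding up to more than `m`, so they meet nontrivially.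
  have hWV : 0 < Module.finrank ℝ ↥(W ⊓ V) := by
    have := Submodule.finrank_sup_add_finrank_inf_eq W V
    have := (W ⊔ V).finrank_le
    simp only [finrank_euclideanSpace_fin] at this
    omega
  obtain ⟨⟨x, hxW, hxV⟩, hx0⟩ := Module.finrank_pos_iff_exists_ne_zero.mp hWV
  have hx : 0 < ‖x‖ ^ 2 := by
    have : x ≠ 0 := fun h => hx0 (by simp [h])
    positivity
  have hle := hA.inner_toEuclideanLin_self_le_of_mem_span (c := hA.eigenvalues (σ ⟨m - j, _⟩))
    (fun i hi => by
      obtain ⟨k, hk, rfl⟩ := mem_image.mp hi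
      exact Tuple.monotone_sort hA.eigenvalues (mem_Iic.mp hk)) hxW
  exact le_of_mul_le_mul_right ((hs x hxV).trans hle) hx

lemma exists_finrank_eq_forall_eigenvalues_sort_mul_le {j : ℕ} (hj1 : 1 ≤ j) (hjm : j ≤ m) :
    ∃ V : Submodule ℝ (EuclideanSpace ℝ (Fin m)), Module.finrank ℝ V = j ∧
      ∀ x ∈ V, hA.eigenvalues (Tuple.sort hA.eigenvalues ⟨m - j, by omega⟩) * ‖x‖ ^ 2 ≤
        ⟪x, toEuclideanLin A x⟫ := by
  set σ := Tuple.sort hA.eigenvalues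
  refine ⟨Submodule.span ℝ (hA.eigenvectorBasis '' (Ici (⟨m - j, by omega⟩ : Fin m)).image σ),
    ?_, fun x hx => hA.mul_norm_sq_le_inner_toEuclideanLin_self_of_mem_span (fun i hi => ?_) hx⟩
  · rw [finrank_span_eigenvectorBasis_image, card_image_of_injective _ σ.injective, Fin.card_Ici]
    dsimp only
    omega
  · obtain ⟨k, hk, rfl⟩ := mem_image.mp hi
    exact Tuple.monotone_sort hA.eigenvalues (mem_Ici.mp hk)

end Matrix.IsHermitian

lemma Matrix.inner_toEuclideanLin_mul_conjTranspose_self {m n : Type*} [Fintype m] [Fintype n]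
    [DecidableEq m] [DecidableEq n] (M : Matrix m n ℝ) (x : EuclideanSpace ℝ m) :
    ⟪x, toEuclideanLin (M * Mᴴ) x⟫ = ‖toEuclideanLin Mᴴ x‖ ^ 2 := by
  have hM : toEuclideanLin M = (toEuclideanLin Mᴴ).adjoint := by
    rw [← toEuclideanLin_conjTranspose_eq_adjoint, conjTranspose_conjTranspose]
  rw [toLpLin_mul_same, LinearMap.comp_apply, hM, LinearMap.adjoint_inner_right,
    real_inner_self_eq_norm_sq]

section SingularValues

variable {m : ℕ} (M : Matrix (Fin m) (Fin m) ℝ) {j : ℕ}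

lemma sv_nonneg : 0 ≤ sv M j := by
  unfold sv
  split_ifs
  exacts [Real.sqrt_nonneg _, le_rfl]

lemma sv_of_not_le (hj : ¬(1 ≤ j ∧ j ≤ m)) : sv M j = 0 :=
  dif_neg hj

lemma sq_sv_le_sum_sq : sv M j ^ 2 ≤ ∑ i, ∑ k, M i k ^ 2 := by
  by_cases hj : 1 ≤ j ∧ j ≤ m
  · set hMM := isHermitian_mul_conjTranspose_self M
    have htrace : (M * Mᴴ).trace = ∑ i, ∑ k, M i k ^ 2 := by
      simp [trace, mul_apply, sq]
    rw [sv, dif_pos hj, Real.sq_sqrt (eigenvalues_self_mul_conjTranspose_nonneg M _), ← htrace,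
      hMM.trace_eq_sum_eigenvalues]
    exact_mod_cast single_le_sum (fun i _ => eigenvalues_self_mul_conjTranspose_nonneg M i)
      (mem_univ _)
  · rw [sv_of_not_le M hj, sq, zero_mul]
    positivity

lemma sv_le_of_forall_abs_le {c : ℝ} (hc : ∀ i k, |M i k| ≤ c) : sv M j ≤ m * c := by
  rcases Nat.eq_zero_or_pos m with rfl | hm
  · simp [sv_of_not_le M (j := j) (by omega)]
  have hc0 : 0 ≤ c := (abs_nonneg _).trans (hc ⟨0, hm⟩ ⟨0, hm⟩)
  refine le_of_sq_le_sq ?_ (by positivity)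
  calc sv M j ^ 2 ≤ ∑ i, ∑ k, M i k ^ 2 := sq_sv_le_sum_sq M
    _ ≤ ∑ _i : Fin m, ∑ _k : Fin m, c ^ 2 := by
      refine sum_le_sum fun i _ => sum_le_sum fun k _ => ?_
      exact sq_le_sq' (abs_le.mp (hc i k)).1 (abs_le.mp (hc i k)).2
    _ = (m * c) ^ 2 := by
      simp only [sum_const, card_univ, Fintype.card_fin, nsmul_eq_mul]
      ring

lemma sv_eq_zero_of_rank_lt (h : M.rank < j) : sv M j = 0 := by
  by_cases hj : 1 ≤ j ∧ j ≤ m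
  · set hMM := isHermitian_mul_conjTranspose_self M
    set σ := Tuple.sort hMM.eigenvalues
    suffices hMM.eigenvalues (σ ⟨m - j, by omega⟩) = 0 by rw [sv, dif_pos hj, this, Real.sqrt_zero]
    by_contra hne
    have hpos := (eigenvalues_self_mul_conjTranspose_nonneg M _).lt_of_ne' hne
    -- The `j` largest eigenvalues of `M Mᴴ` would all be nonzero.
    have hsub : (Ici (⟨m - j, by omega⟩ : Fin m)).image σ ⊆
        ({i | hMM.eigenvalues i ≠ 0} : Finset (Fin m)) := by
      intro i hi
      obtain ⟨k, hk, rfl⟩ := mem_image.mp hi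
      simpa using (hpos.trans_le (Tuple.monotone_sort hMM.eigenvalues (mem_Ici.mp hk))).ne'
    have := card_le_card hsub
    rw [card_image_of_injective _ σ.injective, Fin.card_Ici, ← Fintype.card_subtype,
      ← hMM.rank_eq_card_non_zero_eigs, rank_self_mul_conjTranspose] at this
    dsimp only at this
    omega
  · exact sv_of_not_le M hj

lemma le_sv_of_forall_mem (hj : 1 ≤ j) {s : ℝ} (hs : 0 ≤ s)
    {V : Submodule ℝ (EuclideanSpace ℝ (Fin m))} (hV : Module.finrank ℝ V = j)
    (hsV : ∀ x ∈ V, s ^ 2 * ‖x‖ ^ 2 ≤ ‖toEuclideanLin Mᴴ x‖ ^ 2) : s ≤ sv M j := by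
  have hjm : j ≤ m := by simpa [hV] using V.finrank_le
  rw [sv, dif_pos ⟨hj, hjm⟩, ← Real.sqrt_sq hs]
  refine Real.sqrt_le_sqrt <|
    (isHermitian_mul_conjTranspose_self M).le_eigenvalues_sort_of_forall_mem hj hjm hV.ge
      fun x hx => ?_
  rw [inner_toEuclideanLin_mul_conjTranspose_self]
  exact hsV x hx

lemma exists_finrank_eq_forall_sq_sv_mul_le (hj : 1 ≤ j ∧ j ≤ m) :
    ∃ V : Submodule ℝ (EuclideanSpace ℝ (Fin m)), Module.finrank ℝ V = j ∧
      ∀ x ∈ V, sv M j ^ 2 * ‖x‖ ^ 2 ≤ ‖toEuclideanLin Mᴴ x‖ ^ 2 := by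
  obtain ⟨V, hV, hsV⟩ :=
    (isHermitian_mul_conjTranspose_self M).exists_finrank_eq_forall_eigenvalues_sort_mul_le
      hj.1 hj.2
  refine ⟨V, hV, fun x hx => ?_⟩
  rw [sv, dif_pos hj, Real.sq_sqrt (eigenvalues_self_mul_conjTranspose_nonneg M _),
    ← inner_toEuclideanLin_mul_conjTranspose_self]
  exact hsV x hx

end SingularValues

lemma Matrix.norm_sq_toEuclideanLin_of_transpose_mul_eq_diagonal {ι κ : Type*} [Fintype ι]
    [Fintype κ] [DecidableEq ι] [DecidableEq κ] {Z : Matrix ι κ ℝ} {n : κ → ℝ}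
    (hZ : Zᵀ * Z = diagonal n) (v : EuclideanSpace ℝ κ) :
    ‖toEuclideanLin Z v‖ ^ 2 = ∑ k, n k * v k ^ 2 := by
  have := inner_toEuclideanLin_mul_conjTranspose_self Zᴴ v
  rw [conjTranspose_conjTranspose, conjTranspose_eq_transpose_of_trivial, hZ] at this
  rw [← this]
  simp [PiLp.inner_apply, mulVec_diagonal, sq, mul_assoc]

lemma Matrix.transpose_mul_self_eq_diagonal_card {ι κ : Type*} [Fintype ι]
    [DecidableEq κ] {τ : ι → κ} {Z : Matrix ι κ ℝ} (hZ : ∀ i k, Z i k = if τ i = k then 1 else 0)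
    {n : κ → ℕ} (hn : ∀ k, n k = #{i | τ i = k}) : Zᵀ * Z = diagonal fun k => (n k : ℝ) := by
  ext k l
  by_cases hkl : k = l
  · subst hkl
    simp [mul_apply, hZ, hn, ← ite_and]
  · simp only [mul_apply, transpose_apply, hZ, diagonal_apply_ne _ hkl]
    exact sum_eq_zero fun i _ => by split_ifs with hk hl <;> simp_all

lemma Matrix.mul_mul_transpose_apply_of_eq_ite {ι κ : Type*} [Fintype κ]
    [DecidableEq κ] {τ : ι → κ} {Z : Matrix ι κ ℝ} (hZ : ∀ i k, Z i k = if τ i = k then 1 else 0)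
    (B : Matrix κ κ ℝ) (i j : ι) : (Z * B * Zᵀ) i j = B (τ i) (τ j) := by
  simp [mul_apply, hZ]

lemma Matrix.abs_mul_apply_le_card {ι κ ν : Type*} [Fintype κ] {P : Matrix ι κ ℝ}
    {R : Matrix κ ν ℝ} (hP : ∀ i k, |P i k| ≤ 1) (hR : ∀ k l, |R k l| ≤ 1) (i : ι) (l : ν) :
    |(P * R) i l| ≤ Fintype.card κ := by
  calc |(P * R) i l| ≤ ∑ k, |P i k * R k l| := abs_sum_le_sum_abs _ _
    _ ≤ ∑ _k : κ, (1 : ℝ) := sum_le_sum fun k _ => by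
      rw [abs_mul]; exact mul_le_one₀ (hP i k) (abs_nonneg _) (hR k l)
    _ = Fintype.card κ := by simp

section GramDiagonal

variable {ι κ : Type*} [Fintype ι] [Fintype κ] [DecidableEq ι] [DecidableEq κ]
  {Z : Matrix ι κ ℝ} {n : κ → ℝ} {a : ℝ}

lemma Matrix.mul_norm_sq_le_norm_sq_toEuclideanLin (hZ : Zᵀ * Z = diagonal n)
    (ha : ∀ k, a ≤ n k) (v : EuclideanSpace ℝ κ) :
    a * ‖v‖ ^ 2 ≤ ‖toEuclideanLin Z v‖ ^ 2 := by
  rw [norm_sq_toEuclideanLin_of_transpose_mul_eq_diagonal hZ, EuclideanSpace.norm_sq_eq, mul_sum]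
  exact sum_le_sum fun k _ => by rw [Real.norm_eq_abs, sq_abs]; gcongr; exact ha k

lemma Matrix.mul_norm_sq_toEuclideanLin_mul_diagonal_inv_le (hZ : Zᵀ * Z = diagonal n)
    (ha : ∀ k, a ≤ n k) (ha0 : 0 < a) (u : EuclideanSpace ℝ κ) :
    a * ‖toEuclideanLin (Z * diagonal n⁻¹) u‖ ^ 2 ≤ ‖u‖ ^ 2 := by
  rw [toLpLin_mul_same, LinearMap.comp_apply,
    norm_sq_toEuclideanLin_of_transpose_mul_eq_diagonal hZ, EuclideanSpace.norm_sq_eq, mul_sum]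
  refine sum_le_sum fun k _ => ?_
  have hnk : 0 < n k := ha0.trans_le (ha k)
  calc a * (n k * (toEuclideanLin (diagonal n⁻¹) u k) ^ 2) = a / n k * u k ^ 2 := by
        simp only [ofLp_toLpLin, toLin'_apply, mulVec_diagonal, Pi.inv_apply]
        field_simp
    _ ≤ 1 * u k ^ 2 := by gcongr; exact div_le_one_of_le₀ (ha k) hnk.le
    _ = ‖u k‖ ^ 2 := by rw [one_mul, Real.norm_eq_abs, sq_abs]

end GramDiagonal

theorem mul_sv_le_sv_mul_mul_transpose {N K j : ℕ} {Z : Matrix (Fin N) (Fin K) ℝ}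
    {n : Fin K → ℝ} (hZ : Zᵀ * Z = diagonal n) {a : ℝ} (ha : ∀ k, a ≤ n k)
    (C : Matrix (Fin K) (Fin K) ℝ) : a * sv C j ≤ sv (Z * C * Zᵀ) j := by
  rcases le_or_gt a 0 with ha0 | ha0
  · exact (mul_nonpos_of_nonpos_of_nonneg ha0 (sv_nonneg C)).trans (sv_nonneg _)
  by_cases hj : 1 ≤ j ∧ j ≤ K
  swap
  · rw [sv_of_not_le C hj, mul_zero]
    exact sv_nonneg _
  obtain ⟨V, hV, hCV⟩ := exists_finrank_eq_forall_sq_sv_mul_le C hj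
  set G := toEuclideanLin (Z * diagonal n⁻¹) with hG
  have hZG : Zᵀ * (Z * diagonal n⁻¹) = 1 := by
    rw [← Matrix.mul_assoc, hZ, diagonal_mul_diagonal, ← diagonal_one]
    exact congrArg diagonal (funext fun k => mul_inv_cancel₀ (ha0.trans_le (ha k)).ne')
  have hG_inj : Function.Injective G := by
    refine Function.LeftInverse.injective (g := toEuclideanLin Zᵀ) fun u => ?_
    rw [← LinearMap.comp_apply, ← toLpLin_mul_same, hZG, toLpLin_one, LinearMap.id_apply]
  have hMG : ∀ u, toEuclideanLin (Z * C * Zᵀ)ᴴ (G u) = toEuclideanLin Z (toEuclideanLin Cᴴ u) := by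
    have hM : (Z * C * Zᵀ)ᴴ = Z * Cᴴ * Zᵀ := by
      rw [conjTranspose_mul, conjTranspose_mul, conjTranspose_eq_transpose_of_trivial Zᵀ,
        transpose_transpose, conjTranspose_eq_transpose_of_trivial Z, Matrix.mul_assoc]
    intro u
    rw [hG, ← LinearMap.comp_apply, ← LinearMap.comp_apply (toEuclideanLin Z), ← toLpLin_mul_same,
      ← toLpLin_mul_same, hM, Matrix.mul_assoc (Z * Cᴴ), hZG, Matrix.mul_one]
  refine le_sv_of_forall_mem _ hj.1 (mul_nonneg ha0.le (sv_nonneg C))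
    ((Submodule.equivMapOfInjective G hG_inj V).finrank_eq.symm.trans hV) ?_
  rintro _ ⟨u, hu, rfl⟩
  rw [hMG]
  calc (a * sv C j) ^ 2 * ‖G u‖ ^ 2 = a * sv C j ^ 2 * (a * ‖G u‖ ^ 2) := by ring
    _ ≤ a * (sv C j ^ 2 * ‖u‖ ^ 2) := by
      rw [mul_assoc]; gcongr; exact mul_norm_sq_toEuclideanLin_mul_diagonal_inv_le hZ ha ha0 u
    _ ≤ a * ‖toEuclideanLin Cᴴ u‖ ^ 2 := by gcongr; exact hCV u hu
    _ ≤ _ := mul_norm_sq_le_norm_sq_toEuclideanLin hZ ha _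

theorem stmt4_general {N K d : ℕ}
    (B : Matrix (Fin K) (Fin K) ℝ) (hB : ∀ k l, B k l ∈ Set.Icc (0 : ℝ) 1)
    (hrank : B.rank = d)
    (τ : Fin N → Fin K)
    (Z : Matrix (Fin N) (Fin K) ℝ) (hZ : ∀ i k, Z i k = if τ i = k then 1 else 0)
    (Q : Matrix (Fin N) (Fin N) ℝ) (hQ : Q = Z * B * Zᵀ)
    (n : Fin K → ℕ) (hn : ∀ k, n k = (Finset.univ.filter fun i => τ i = k).card)
    (πt : ℝ) (hπt : IsLeast (Set.range fun k => (n k : ℝ) / N) πt)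
    (Bt : Matrix (Fin K) (Fin K) ℝ)
    (hBt : Bt = B * Matrix.diagonal (fun k => (n k : ℝ)) * B)
    (bt : ℝ) (hlam : sv Bt d = bt * N) :
    sv (Q * Q) 1 ≤ (N : ℝ) ^ 2 ∧
    sv (Q * Q) (d + 1) = 0 ∧
    (N : ℝ) * πt * sv Bt d ≤ sv (Q * Q) d ∧
    πt * bt * (N : ℝ) ^ 2 ≤ sv (Q * Q) d := by
  have hgram := transpose_mul_self_eq_diagonal_card hZ hn
  have hQQ : Q * Q = Z * Bt * Zᵀ := by
    rw [hQ, hBt, ← hgram]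
    simp only [Matrix.mul_assoc]
  have hQ_abs : ∀ i j, |Q i j| ≤ 1 := fun i j => by
    rw [hQ, mul_mul_transpose_apply_of_eq_ite hZ]
    exact abs_le.mpr ⟨by linarith [(hB (τ i) (τ j)).1], (hB (τ i) (τ j)).2⟩
  have hπt_le : ∀ k, N * πt ≤ n k := fun k => by
    rcases Nat.eq_zero_or_pos N with hN | hN
    · simp [hN]
    · exact (le_div_iff₀' (by exact_mod_cast hN)).mp (hπt.2 ⟨k, rfl⟩)
  have hlower : N * πt * sv Bt d ≤ sv (Q * Q) d :=
    hQQ ▸ mul_sv_le_sv_mul_mul_transpose hgram hπt_le Bt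
  refine ⟨?_, sv_eq_zero_of_rank_lt _ ?_, hlower, ?_⟩
  · simpa [sq] using sv_le_of_forall_abs_le (Q * Q) fun i j => by
      simpa using abs_mul_apply_le_card hQ_abs hQ_abs i j
  · calc (Q * Q).rank ≤ Q.rank := rank_mul_le_left Q Q
      _ ≤ (Z * B).rank := hQ ▸ rank_mul_le_left (Z * B) Zᵀ
      _ ≤ d := hrank ▸ rank_mul_le_right Z B
      _ < d + 1 := d.lt_succ_self
  · calc πt * bt * (N : ℝ) ^ 2 = N * πt * sv Bt d := by rw [hlam]; ring
      _ ≤ sv (Q * Q) d := hlower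

/-- For `Q = Z B Zᵀ` with `rank B = d ≤ K` and `Q̃ = QQ`:
(i) `σ₁(Q̃) ≤ N²`; (ii) `σ_{d+1}(Q̃) = 0`; (iii) `σ_d(Q̃) ≥ N π̃ λ_d(B̃)`, and in particular
`σ_d(Q̃) ≥ π̃ b̃ N²` when `λ_d(B̃) = b̃ N`. -/
theorem stmt4 {N K d : ℕ} (hdK : d ≤ K) (hdN : d ≤ N)
    (B : Matrix (Fin K) (Fin K) ℝ) (hB : ∀ k l, B k l ∈ Set.Icc (0 : ℝ) 1)
    (hrank : B.rank = d)
    (τ : Fin N → Fin K)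
    (Z : Matrix (Fin N) (Fin K) ℝ) (hZ : ∀ i k, Z i k = if τ i = k then 1 else 0)
    (Q : Matrix (Fin N) (Fin N) ℝ) (hQ : Q = Z * B * Zᵀ)
    (n : Fin K → ℕ) (hn : ∀ k, n k = (Finset.univ.filter fun i => τ i = k).card)
    (πt : ℝ) (hπt : IsLeast (Set.range fun k => (n k : ℝ) / N) πt)
    (Bt : Matrix (Fin K) (Fin K) ℝ)
    (hBt : Bt = B * Matrix.diagonal (fun k => (n k : ℝ)) * B)
    (bt : ℝ) (hbt : 0 < bt) (hlam : sv Bt d = bt * N) :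
    sv (Q * Q) 1 ≤ (N : ℝ) ^ 2 ∧
    sv (Q * Q) (d + 1) = 0 ∧
    (N : ℝ) * πt * sv Bt d ≤ sv (Q * Q) d ∧
    πt * bt * (N : ℝ) ^ 2 ≤ sv (Q * Q) d :=
  stmt4_general B hB hrank τ Z hZ Q hQ n hn πt hπt Bt hBt bt hlam
end

section
/- Let A ∈ {0,1}^{N×N} be a random matrix whose N² entries are mutually independent Bernoulli random variables with P(A_{ij} = 1) = Q_{ij}, and let Ã = AA. Then for all u, v, w ∈ {1,…,N}, Cov(Ã_{uw}, Ã_{vw}) ≥ 0. -/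
/-!
Write `X_S = ∏_{p ∈ S} A_p` for a set `S` of entries. Since the entries are `0/1`-valued,
`Ã_{aw} = ∑_k X_{{(a,k),(k,w)}}` and `X_S X_T = X_{S ∪ T}`, so by independence
`Cov(X_S, X_T) = q^{S ∪ T} (1 - q^{S ∩ T}) ≥ 0` with `q_p = E A_p ∈ [0,1]`.
Bilinearity of the covariance then gives `Cov(Ã_{uw}, Ã_{vw}) ≥ 0`.
-/

open MeasureTheory ProbabilityTheory Matrix Finset

lemma Finset.prod_mul_prod_eq_prod_union_of_mul_self {ι M : Type*} [CommMonoid M] [DecidableEq ι]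
    {x : ι → M} (hx : ∀ i, x i * x i = x i) (S T : Finset ι) :
    (∏ i ∈ S, x i) * ∏ i ∈ T, x i = ∏ i ∈ S ∪ T, x i := by
  have hidem : (∏ i ∈ S ∩ T, x i) * ∏ i ∈ S ∩ T, x i = ∏ i ∈ S ∩ T, x i := by
    rw [← prod_mul_distrib]; exact prod_congr rfl fun i _ => hx i
  rw [← prod_union_inter, ← prod_sdiff (inter_subset_union (s := S) (t := T)), mul_assoc, hidem]

lemma Matrix.mul_self_apply_eq_sum_prod {n R : Type*} [Fintype n] [DecidableEq n] [CommSemiring R]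
    {A : Matrix n n R} (hA : ∀ i j, A i j * A i j = A i j) (a b : n) :
    (A * A) a b = ∑ k, ∏ p ∈ ({(a, k), (k, b)} : Finset (n × n)), A p.1 p.2 := by
  refine sum_congr rfl fun k _ => ?_
  by_cases hakb : (a, k) = (k, b)
  · obtain ⟨rfl, rfl⟩ := Prod.mk.inj hakb
    simp [hA]
  · rw [prod_pair hakb]

section IndependentIndicators

variable {Ω ι : Type*} [MeasurableSpace Ω] {μ : Measure Ω} {f : ι → Ω → ℝ}

lemma memLp_finset_prod_of_zero_or_one [IsFiniteMeasure μ] (hm : ∀ i, Measurable (f i))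
    (h01 : ∀ i ω, f i ω = 0 ∨ f i ω = 1) (S : Finset ι) :
    MemLp (fun ω => ∏ i ∈ S, f i ω) 2 μ := by
  refine MemLp.of_bound (S.measurable_fun_prod fun i _ => hm i).aestronglyMeasurable 1
    (ae_of_all _ fun ω => ?_)
  rw [norm_prod]
  refine prod_le_one (fun i _ => norm_nonneg _) fun i _ => ?_
  rcases h01 i ω with h | h <;> simp [h]

lemma integral_finset_prod_of_iIndepFun (hm : ∀ i, Measurable (f i)) (hindep : iIndepFun f μ)
    (S : Finset ι) : ∫ ω, ∏ i ∈ S, f i ω ∂μ = ∏ i ∈ S, ∫ ω, f i ω ∂μ := by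
  simpa only [← prod_coe_sort S] using
    (hindep.precomp Subtype.val_injective).integral_fun_prod_eq_prod_integral
      fun i => (hm i).aestronglyMeasurable

theorem covariance_finset_prod_nonneg_of_zero_or_one [IsProbabilityMeasure μ] [DecidableEq ι]
    (hm : ∀ i, Measurable (f i)) (h01 : ∀ i ω, f i ω = 0 ∨ f i ω = 1) (hindep : iIndepFun f μ)
    (S T : Finset ι) :
    0 ≤ cov[fun ω => ∏ i ∈ S, f i ω, fun ω => ∏ i ∈ T, f i ω; μ] := by
  have hint_nonneg : ∀ i, 0 ≤ ∫ ω, f i ω ∂μ := fun i =>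
    integral_nonneg fun ω => by rcases h01 i ω with h | h <;> simp [h]
  have hint_le_one : ∀ i, ∫ ω, f i ω ∂μ ≤ 1 := fun i =>
    (le_abs_self _).trans <| by
      simpa using norm_integral_le_of_norm_le_const (μ := μ) (f := f i) (C := 1)
        (ae_of_all _ fun ω => by rcases h01 i ω with h | h <;> simp [h])
  have hidem : ∀ ω i, f i ω * f i ω = f i ω := fun ω i => by
    rcases h01 i ω with h | h <;> simp [h]
  rw [covariance_eq_sub (memLp_finset_prod_of_zero_or_one hm h01 S)
    (memLp_finset_prod_of_zero_or_one hm h01 T)]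
  simp only [Pi.mul_def, prod_mul_prod_eq_prod_union_of_mul_self (hidem _),
    integral_finset_prod_of_iIndepFun hm hindep]
  rw [← prod_union_inter, sub_nonneg]
  exact mul_le_of_le_one_right (prod_nonneg fun i _ => hint_nonneg i)
    (prod_le_one (fun i _ => hint_nonneg i) fun i _ => hint_le_one i)

end IndependentIndicators

theorem stmt9_general {N : ℕ}
    {Ω : Type*} [MeasurableSpace Ω] (μ : Measure Ω) [IsProbabilityMeasure μ]
    (A : Ω → Matrix (Fin N) (Fin N) ℝ)
    (h01 : ∀ ω i j, A ω i j = 0 ∨ A ω i j = 1)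
    (hmeas : ∀ i j, Measurable fun ω => A ω i j)
    (hindep : iIndepFun
      (fun (p : Fin N × Fin N) ω => A ω p.1 p.2) μ)
    (u v w : Fin N) :
    0 ≤ (∫ ω, (A ω * A ω) u w * (A ω * A ω) v w ∂μ) -
        (∫ ω, (A ω * A ω) u w ∂μ) * (∫ ω, (A ω * A ω) v w ∂μ) := by
  set f : Fin N × Fin N → Ω → ℝ := fun p ω => A ω p.1 p.2
  have hf01 : ∀ p ω, f p ω = 0 ∨ f p ω = 1 := fun p ω => h01 ω p.1 p.2
  have hfm : ∀ p, Measurable (f p) := fun p => hmeas p.1 p.2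
  have hentry : ∀ ω a, (A ω * A ω) a w = ∑ k, ∏ p ∈ {(a, k), (k, w)}, f p ω := fun ω a =>
    mul_self_apply_eq_sum_prod (fun i j => by rcases h01 ω i j with h | h <;> simp [h]) a w
  simp only [hentry]
  have hmonomial : ∀ a k, MemLp (fun ω => ∏ p ∈ {(a, k), (k, w)}, f p ω) 2 μ := fun a k =>
    memLp_finset_prod_of_zero_or_one hfm hf01 _
  refine le_of_le_of_eq ?_ (covariance_eq_sub (memLp_finsetSum _ fun k _ => hmonomial u k)
    (memLp_finsetSum _ fun k _ => hmonomial v k))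
  rw [covariance_fun_sum_fun_sum (hmonomial u) (hmonomial v)]
  exact sum_nonneg fun k _ => sum_nonneg fun l _ =>
    covariance_finset_prod_nonneg_of_zero_or_one hfm hf01 hindep _ _

/-- For a random 0/1 matrix `A` with mutually independent Bernoulli entries and
`Ã = A*A`, the covariance `Cov(Ã_{uw}, Ã_{vw}) = E(Ã_{uw} Ã_{vw}) − E(Ã_{uw}) E(Ã_{vw})` is
nonnegative for all `u, v, w`. -/
theorem stmt9 {N : ℕ}
    {Ω : Type*} [MeasurableSpace Ω] (μ : Measure Ω) [IsProbabilityMeasure μ]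
    (Q : Matrix (Fin N) (Fin N) ℝ) (hQrange : ∀ i j, Q i j ∈ Set.Icc (0 : ℝ) 1)
    (A : Ω → Matrix (Fin N) (Fin N) ℝ)
    (h01 : ∀ ω i j, A ω i j = 0 ∨ A ω i j = 1)
    (hmeas : ∀ i j, Measurable fun ω => A ω i j)
    (hindep : iIndepFun
      (fun (p : Fin N × Fin N) ω => A ω p.1 p.2) μ)
    (hBer : ∀ i j, μ {ω | A ω i j = 1} = ENNReal.ofReal (Q i j))
    (u v w : Fin N) :
    0 ≤ (∫ ω, (A ω * A ω) u w * (A ω * A ω) v w ∂μ) -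
        (∫ ω, (A ω * A ω) u w ∂μ) * (∫ ω, (A ω * A ω) v w ∂μ) :=
  stmt9_general μ A h01 hmeas hindep u v w
end

section
/- Let A ∈ {0,1}^{N×N} be a directed core-periphery stochastic block model adjacency matrix with blocks G₁, G₂ of sizes n₁, n₂ and probabilities 0 ≤ s < r, q < p ≤ 1, Q the block-constant mean matrix. Define T₁ = Σ_{w∈G₁}(1 − r²) + Σ_{w∈G₂}(1 − s²) and T₂ = Σ_{w∈G₁}(1 − q²) + Σ_{w∈G₂}(1 − s²). Then with probability at least 1 − 2N^{2 − (4/N²)T₁²}, ‖AAᵀ − QQᵀ‖_F ≤ √3 · T₁ · √(N log N); and with probability at least 1 − 2N^{2 − (4/N²)T₂²}, ‖AᵀA − QᵀQ‖_F ≤ √3 · T₂ · √(N log N). -/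
/-!
Entry `(u, v)` of `A Aᵀ` is `∑ j, A u j * A v j`, a sum of `N` independent `[0, 1]`-valued
variables (distinct columns of `A` are independent), so Hoeffding's inequality keeps it within
`a = T √(2 log N / N)` of its mean outside an event of probability `2 exp (-2 a² / N)`, and a union
bound over the `N²` entries gives total failure probability `2 N ^ (2 - 4 T² / N²)`. Because
`A u j ^ 2 = A u j`, the mean of `A Aᵀ` differs from `Q Qᵀ` only on the diagonal, by
`∑ j, (Q u j - Q u j ^ 2) ≤ N / 4`. Whenever the probability bound is nontrivial,
`T² log N > N² / 2`, which makes this diagonal surplus small enough that the squared Frobenius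
norm stays below `N² a² + N ((a + N / 4)² - a²) ≤ 3 T² N log N`. The bound for `Aᵀ A` is the
same statement for `Aᵀ` and `Qᵀ`.
-/

open MeasureTheory ProbabilityTheory Matrix Finset

/-- Frobenius norm of a real matrix. -/
noncomputable def frobNorm {m n : Type*} [Fintype m] [Fintype n] (M : Matrix m n ℝ) : ℝ :=
  Real.sqrt (∑ i, ∑ j, (M i j) ^ 2)

open scoped NNReal

namespace ProbabilityTheory

variable {Ω : Type*} [MeasurableSpace Ω] {μ : Measure Ω}

lemma hasSubgaussianMGF_sub_integral_of_mem_Icc_zero_one [IsProbabilityMeasure μ] {Y : Ω → ℝ}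
    (hY : Measurable Y) (hY01 : ∀ ω, Y ω ∈ Set.Icc (0 : ℝ) 1) :
    HasSubgaussianMGF (fun ω ↦ Y ω - μ[Y]) 4⁻¹ μ := by
  have hc : ((‖(1 : ℝ) - 0‖₊ / 2) ^ 2 : ℝ≥0) = 4⁻¹ := by norm_num
  simpa only [hc] using hasSubgaussianMGF_of_mem_Icc hY.aemeasurable (ae_of_all μ hY01)

lemma measureReal_sum_ge_le_of_hasSubgaussianMGF_inv_four [IsProbabilityMeasure μ] {ι : Type*}
    {W : ι → Ω → ℝ} (hindep : iIndepFun W μ) (hW : ∀ i, HasSubgaussianMGF (W i) 4⁻¹ μ)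
    (s : Finset ι) {ε : ℝ} (hε : 0 ≤ ε) :
    μ.real {ω | ε ≤ ∑ i ∈ s, W i ω} ≤ Real.exp (-2 * ε ^ 2 / #s) := by
  refine (HasSubgaussianMGF.measure_sum_ge_le_of_iIndepFun hindep (fun i _ ↦ hW i) hε).trans_eq ?_
  simp only [sum_const, nsmul_eq_mul]
  push_cast
  ring_nf

lemma measure_abs_sum_sub_integral_ge_le [IsProbabilityMeasure μ] {ι : Type*} {Y : ι → Ω → ℝ}
    (hindep : iIndepFun Y μ) (hY : ∀ i, Measurable (Y i))
    (hY01 : ∀ i ω, Y i ω ∈ Set.Icc (0 : ℝ) 1) (s : Finset ι) {ε : ℝ} (hε : 0 ≤ ε) :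
    μ {ω | ε ≤ |∑ i ∈ s, (Y i ω - μ[Y i])|} ≤
      ENNReal.ofReal (2 * Real.exp (-2 * ε ^ 2 / #s)) := by
  set Z : ι → Ω → ℝ := fun i ω ↦ Y i ω - μ[Y i]
  have hZ (i : ι) : HasSubgaussianMGF (Z i) 4⁻¹ μ :=
    hasSubgaussianMGF_sub_integral_of_mem_Icc_zero_one (hY i) (hY01 i)
  have hZindep : iIndepFun Z μ := hindep.comp _ fun i ↦ measurable_id.sub_const _
  have hupper := measureReal_sum_ge_le_of_hasSubgaussianMGF_inv_four hZindep hZ s hε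
  have hlower := measureReal_sum_ge_le_of_hasSubgaussianMGF_inv_four (W := fun i ω ↦ -Z i ω)
    (hZindep.comp _ fun _ ↦ measurable_neg) (fun i ↦ (hZ i).neg) s hε
  have hsub : {ω | ε ≤ |∑ i ∈ s, Z i ω|} ⊆
      {ω | ε ≤ ∑ i ∈ s, Z i ω} ∪ {ω | ε ≤ ∑ i ∈ s, -Z i ω} := by
    intro ω hω
    simp only [Set.mem_ofPred_eq, Set.mem_union, sum_neg_distrib] at hω ⊢
    exact (le_abs'.mp hω).symm.imp_right fun h ↦ by linarith
  rw [← ofReal_measureReal]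
  gcongr
  calc μ.real {ω | ε ≤ |∑ i ∈ s, Z i ω|}
      ≤ μ.real {ω | ε ≤ ∑ i ∈ s, Z i ω} + μ.real {ω | ε ≤ ∑ i ∈ s, -Z i ω} :=
        (measureReal_mono hsub).trans (measureReal_union_le _ _)
    _ ≤ _ := by linarith

lemma iIndepFun.curry {ι κ 𝓧 : Type*} [MeasurableSpace 𝓧] {X : ι → κ → Ω → 𝓧}
    (hX : ∀ i j, Measurable (X i j)) (h : iIndepFun (fun p : ι × κ ↦ X p.1 p.2) μ) :
    iIndepFun (fun i ω ↦ (X i · ω)) μ := by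
  have := h.isProbabilityMeasure
  have : ∀ i j, IsProbabilityMeasure (μ.map (X i j)) :=
    fun i j ↦ Measure.isProbabilityMeasure_map (hX i j).aemeasurable
  have hrow (i : ι) :
      μ.map (fun ω ↦ (X i · ω)) = Measure.infinitePi fun j ↦ μ.map (X i j) :=
    (h.precomp (Prod.mk_right_injective i)).map_fun_eq_infinitePi_map (hX i)
  have hjoint : Measurable fun ω (p : ι × κ) ↦ X p.1 p.2 ω :=
    measurable_pi_lambda _ fun p ↦ hX p.1 p.2
  rw [iIndepFun_iff_map_fun_eq_infinitePi_map fun i ↦ measurable_pi_lambda _ (hX i)]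
  calc μ.map (fun ω i j ↦ X i j ω)
      = (μ.map fun ω (p : ι × κ) ↦ X p.1 p.2 ω).map (MeasurableEquiv.curry ι κ 𝓧) := by
        rw [Measure.map_map (MeasurableEquiv.measurable _) hjoint]
        rfl
    _ = Measure.infinitePi fun i ↦ Measure.infinitePi fun j ↦ μ.map (X i j) := by
        rw [h.map_fun_eq_infinitePi_map fun p : ι × κ ↦ hX p.1 p.2]
        exact Measure.infinitePi_map_curry fun i j ↦ μ.map (X i j)
    _ = Measure.infinitePi fun i ↦ μ.map (fun ω ↦ (X i · ω)) := by simp_rw [hrow]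

lemma integral_eq_of_measure_eq_one {Y : Ω → ℝ} (hY : Measurable Y)
    (hY01 : ∀ ω, Y ω = 0 ∨ Y ω = 1) {m : ℝ} (hm : 0 ≤ m)
    (h : μ {ω | Y ω = 1} = ENNReal.ofReal m) : μ[Y] = m := by
  have hind : Y = {ω | Y ω = 1}.indicator 1 := by
    funext ω
    rcases hY01 ω with h | h <;> simp [h]
  rw [hind, integral_indicator_one (s := {ω | Y ω = 1}) (hY (measurableSet_singleton 1)),
    measureReal_def, h, ENNReal.toReal_ofReal hm]

lemma ofReal_one_sub_le_measure [IsProbabilityMeasure μ] {s t : Set Ω} {δ : ℝ} (hδ : 0 ≤ δ)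
    (hs : μ s ≤ ENNReal.ofReal δ) (hst : sᶜ ⊆ t) : ENNReal.ofReal (1 - δ) ≤ μ t := by
  rw [ENNReal.ofReal_sub _ hδ, ENNReal.ofReal_one, tsub_le_iff_right]
  calc 1 = μ (sᶜ ∪ s) := by rw [Set.compl_union_self, measure_univ]
    _ ≤ μ sᶜ + μ s := measure_union_le _ _
    _ ≤ μ t + ENNReal.ofReal δ := add_le_add (measure_mono hst) hs

end ProbabilityTheory

lemma frobNorm_le_of_abs_apply_le {ι : Type*} [Fintype ι] [DecidableEq ι] (X : Matrix ι ι ℝ)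
    {a b : ℝ} (hX : ∀ u v, |X u v| ≤ a + if u = v then b else 0) :
    frobNorm X ≤ √(Fintype.card ι ^ 2 * a ^ 2 + Fintype.card ι * (2 * a * b + b ^ 2)) := by
  refine Real.sqrt_le_sqrt ?_
  calc ∑ u, ∑ v, X u v ^ 2
      ≤ ∑ u : ι, ∑ v : ι, (a ^ 2 + if u = v then 2 * a * b + b ^ 2 else 0) := by
        gcongr with u _ v _
        rw [← sq_abs]
        refine (pow_le_pow_left₀ (abs_nonneg _) (hX u v) 2).trans_eq ?_
        split_ifs <;> ring
    _ = _ := by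
        simp only [sum_add_distrib, sum_ite_eq, mem_univ, if_true, sum_const, card_univ,
          nsmul_eq_mul]
        ring

lemma sum_sub_sq_mem_Icc {ι : Type*} (s : Finset ι) {m : ι → ℝ}
    (hm : ∀ i, m i ∈ Set.Icc (0 : ℝ) 1) :
    ∑ i ∈ s, (m i - m i ^ 2) ∈ Set.Icc 0 ((#s : ℝ) / 4) := by
  have h (i : ι) : m i - m i ^ 2 ∈ Set.Icc 0 (1 / 4) := by
    obtain ⟨h0, h1⟩ := hm i
    constructor <;> nlinarith [sq_nonneg (m i - 1 / 2)]
  constructor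
  · exact sum_nonneg fun i _ ↦ (h i).1
  · simpa [div_eq_mul_one_div (#s : ℝ)] using sum_le_card_nsmul s _ _ fun i _ ↦ (h i).2

lemma half_sq_lt_sq_mul_log_of_rpow_lt_half {n T : ℝ} (hn : 2 ≤ n)
    (h : n ^ (2 - 4 / n ^ 2 * T ^ 2) < 1 / 2) : n ^ 2 / 2 < T ^ 2 * Real.log n := by
  have hlog2 := Real.log_two_gt_d9
  have hlogn : Real.log 2 ≤ Real.log n := Real.log_le_log (by norm_num) hn
  have hlog := Real.log_lt_log (by positivity) h
  rw [Real.log_rpow (by positivity), one_div, Real.log_inv] at hlog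
  have hscaled : 2 * n ^ 2 * Real.log n + n ^ 2 * Real.log 2 < 4 * T ^ 2 * Real.log n := by
    have := mul_lt_mul_of_pos_right hlog (by positivity : (0 : ℝ) < n ^ 2)
    field_simp at this
    linarith
  -- `log n / 2 + log 2 / 4 ≥ 3 log 2 / 4 > 1 / 2`
  nlinarith

lemma sq_mul_exp_eq_rpow {n T a : ℝ} (hn : 0 < n) (ha2 : a ^ 2 = 2 * T ^ 2 * Real.log n / n) :
    n ^ 2 * (2 * Real.exp (-2 * a ^ 2 / n)) = 2 * n ^ ((2 : ℝ) - 4 / n ^ 2 * T ^ 2) := by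
  rw [Real.rpow_sub hn, Real.rpow_two, Real.rpow_def_of_pos hn, ha2, div_eq_mul_inv (n ^ 2),
    ← Real.exp_neg]
  have hexp : -2 * (2 * T ^ 2 * Real.log n / n) / n = -(Real.log n * (4 / n ^ 2 * T ^ 2)) := by
    field_simp
    ring
  rw [hexp]
  ring

lemma sqrt_sq_mul_sq_add_le {n T a : ℝ} (hn : 2 ≤ n) (hT : 0 ≤ T) (ha : 0 ≤ a)
    (ha2 : a ^ 2 = 2 * T ^ 2 * Real.log n / n) (hTL : n ^ 2 / 2 < T ^ 2 * Real.log n) :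
    √(n ^ 2 * a ^ 2 + n * (2 * a * (n / 4) + (n / 4) ^ 2)) ≤ √3 * T * √(n * Real.log n) := by
  have hna : n ≤ a ^ 2 := by
    rw [ha2, le_div_iff₀ (by positivity)]
    linarith
  have hquad : a + n / 8 ≤ a ^ 2 := by nlinarith
  have hTL' : T ^ 2 * Real.log n = n * a ^ 2 / 2 := by
    rw [ha2]
    field_simp
  rw [← Real.sqrt_sq hT, ← Real.sqrt_mul (by norm_num), ← Real.sqrt_mul (by positivity)]
  refine Real.sqrt_le_sqrt ?_
  nlinarith [mul_le_mul_of_nonneg_left hquad (by positivity : (0 : ℝ) ≤ n ^ 2 / 2)]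

section BernoulliMatrix

variable {Ω : Type*} [MeasurableSpace Ω] {μ : Measure Ω} {N : ℕ}
  {A : Ω → Matrix (Fin N) (Fin N) ℝ} {M : Matrix (Fin N) (Fin N) ℝ}

lemma iIndepFun_entry_mul_entry (hmeas : ∀ i j, Measurable fun ω ↦ A ω i j)
    (hindep : iIndepFun (fun (p : Fin N × Fin N) ω ↦ A ω p.1 p.2) μ) (u v : Fin N) :
    iIndepFun (fun j ω ↦ A ω u j * A ω v j) μ := by
  have hcol : iIndepFun (fun j ω ↦ (A ω · j)) μ :=
    iIndepFun.curry (X := fun j i ω ↦ A ω i j) (fun j i ↦ hmeas i j)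
      (hindep.precomp (Equiv.prodComm _ _).injective)
  exact hcol.comp (fun _ x ↦ x u * x v) fun _ ↦ by fun_prop

lemma integral_entry_mul_entry (h01 : ∀ ω i j, A ω i j = 0 ∨ A ω i j = 1)
    (hmeas : ∀ i j, Measurable fun ω ↦ A ω i j)
    (hindep : iIndepFun (fun (p : Fin N × Fin N) ω ↦ A ω p.1 p.2) μ)
    (hmean : ∀ i j, μ[fun ω ↦ A ω i j] = M i j) (u v j : Fin N) :
    μ[fun ω ↦ A ω u j * A ω v j] = M u j * M v j + if u = v then M u j - M u j ^ 2 else 0 := by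
  by_cases huv : u = v
  · subst huv
    have hidem : (fun ω ↦ A ω u j * A ω u j) = fun ω ↦ A ω u j := by
      funext ω
      rcases h01 ω u j with h | h <;> simp [h]
    rw [hidem, hmean, if_pos rfl]
    ring
  · have hpair : IndepFun (fun ω ↦ A ω u j) (fun ω ↦ A ω v j) μ :=
      hindep.indepFun (i := (u, j)) (j := (v, j)) (by simp [huv])
    rw [hpair.integral_fun_mul_eq_mul_integral (hmeas u j).aestronglyMeasurable
      (hmeas v j).aestronglyMeasurable, hmean, hmean, if_neg huv, add_zero]

lemma mul_transpose_sub_apply (h01 : ∀ ω i j, A ω i j = 0 ∨ A ω i j = 1)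
    (hmeas : ∀ i j, Measurable fun ω ↦ A ω i j)
    (hindep : iIndepFun (fun (p : Fin N × Fin N) ω ↦ A ω p.1 p.2) μ)
    (hmean : ∀ i j, μ[fun ω ↦ A ω i j] = M i j) (ω : Ω) (u v : Fin N) :
    (A ω * (A ω)ᵀ - M * Mᵀ) u v =
      ∑ j, (A ω u j * A ω v j - μ[fun ω ↦ A ω u j * A ω v j]) +
        if u = v then ∑ j, (M u j - M u j ^ 2) else 0 := by
  simp only [integral_entry_mul_entry h01 hmeas hindep hmean, Matrix.sub_apply, mul_apply,
    transpose_apply]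
  split_ifs <;> simp only [sum_sub_distrib, sum_add_distrib, sum_const_zero] <;> ring

lemma frobNorm_mul_transpose_sub_le (hM : ∀ i j, M i j ∈ Set.Icc (0 : ℝ) 1)
    (h01 : ∀ ω i j, A ω i j = 0 ∨ A ω i j = 1) (hmeas : ∀ i j, Measurable fun ω ↦ A ω i j)
    (hindep : iIndepFun (fun (p : Fin N × Fin N) ω ↦ A ω p.1 p.2) μ)
    (hmean : ∀ i j, μ[fun ω ↦ A ω i j] = M i j) {a : ℝ} {ω : Ω}
    (hω : ∀ u v, |∑ j, (A ω u j * A ω v j - μ[fun ω ↦ A ω u j * A ω v j])| < a) :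
    frobNorm (A ω * (A ω)ᵀ - M * Mᵀ) ≤
      √((N : ℝ) ^ 2 * a ^ 2 + N * (2 * a * (N / 4) + (N / 4) ^ 2)) := by
  have hentry (u v : Fin N) :
      |(A ω * (A ω)ᵀ - M * Mᵀ) u v| ≤ a + if u = v then (N : ℝ) / 4 else 0 := by
    rw [mul_transpose_sub_apply h01 hmeas hindep hmean]
    refine (abs_add_le _ _).trans (add_le_add (hω u v).le ?_)
    split_ifs
    · obtain ⟨h0, h1⟩ := sum_sub_sq_mem_Icc univ (hM u)
      simpa only [card_univ, Fintype.card_fin, abs_of_nonneg h0] using h1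
    · simp
  simpa only [Fintype.card_fin] using frobNorm_le_of_abs_apply_le _ hentry

lemma measure_iUnion_abs_sum_sub_integral_ge_le [IsProbabilityMeasure μ]
    (h01 : ∀ ω i j, A ω i j = 0 ∨ A ω i j = 1) (hmeas : ∀ i j, Measurable fun ω ↦ A ω i j)
    (hindep : iIndepFun (fun (p : Fin N × Fin N) ω ↦ A ω p.1 p.2) μ) {a : ℝ} (ha : 0 ≤ a) :
    μ (⋃ p : Fin N × Fin N,
        {ω | a ≤ |∑ j, (A ω p.1 j * A ω p.2 j - μ[fun ω ↦ A ω p.1 j * A ω p.2 j])|}) ≤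
      ENNReal.ofReal ((N : ℝ) ^ 2 * (2 * Real.exp (-2 * a ^ 2 / N))) := by
  refine (measure_iUnion_fintype_le _ _).trans ?_
  calc _ ≤ ∑ _p : Fin N × Fin N, ENNReal.ofReal (2 * Real.exp (-2 * a ^ 2 / N)) := by
        gcongr with p
        have hY01 (j : Fin N) (ω : Ω) : A ω p.1 j * A ω p.2 j ∈ Set.Icc (0 : ℝ) 1 := by
          rcases h01 ω p.1 j with h | h <;> rcases h01 ω p.2 j with h' | h' <;> simp [h, h']
        simpa only [card_univ, Fintype.card_fin] using
          measure_abs_sum_sub_integral_ge_le (iIndepFun_entry_mul_entry hmeas hindep p.1 p.2)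
            (fun j ↦ (hmeas p.1 j).mul (hmeas p.2 j)) hY01 univ ha
    _ = _ := by
        rw [sum_const, card_univ, Fintype.card_prod, Fintype.card_fin, nsmul_eq_mul,
          ← ENNReal.ofReal_natCast, ← ENNReal.ofReal_mul (by positivity)]
        push_cast
        ring_nf

theorem ofReal_one_sub_le_measure_frobNorm_mul_transpose_sub_le [IsProbabilityMeasure μ]
    (hM : ∀ i j, M i j ∈ Set.Icc (0 : ℝ) 1) (h01 : ∀ ω i j, A ω i j = 0 ∨ A ω i j = 1)
    (hmeas : ∀ i j, Measurable fun ω ↦ A ω i j)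
    (hindep : iIndepFun (fun (p : Fin N × Fin N) ω ↦ A ω p.1 p.2) μ)
    (hBer : ∀ i j, μ {ω | A ω i j = 1} = ENNReal.ofReal (M i j)) {T : ℝ} (hT : 0 ≤ T) :
    ENNReal.ofReal (1 - 2 * (N : ℝ) ^ ((2 : ℝ) - 4 / (N : ℝ) ^ 2 * T ^ 2)) ≤
      μ {ω | frobNorm (A ω * (A ω)ᵀ - M * Mᵀ) ≤ √3 * T * √(N * Real.log N)} := by
  have hmean (i j : Fin N) : μ[fun ω ↦ A ω i j] = M i j :=
    integral_eq_of_measure_eq_one (hmeas i j) (fun ω ↦ h01 ω i j) (hM i j).1 (hBer i j)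
  obtain rfl | rfl | hN : N = 0 ∨ N = 1 ∨ 2 ≤ N := by omega
  · simp [frobNorm]
  · norm_num [ENNReal.ofReal_of_nonpos]
  have hn : (2 : ℝ) ≤ N := by exact_mod_cast hN
  rcases le_or_gt (1 - 2 * (N : ℝ) ^ ((2 : ℝ) - 4 / (N : ℝ) ^ 2 * T ^ 2)) 0 with htriv | hpos
  · rw [ENNReal.ofReal_of_nonpos htriv]
    exact zero_le
  have hTL := half_sq_lt_sq_mul_log_of_rpow_lt_half (T := T) hn (by linarith)
  set a := T * √(2 * Real.log N / N)
  have ha : 0 ≤ a := by positivity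
  have ha2 : a ^ 2 = 2 * T ^ 2 * Real.log N / N := by
    rw [mul_pow, Real.sq_sqrt (by positivity)]
    ring
  refine ofReal_one_sub_le_measure (by positivity)
    ((measure_iUnion_abs_sum_sub_integral_ge_le h01 hmeas hindep ha).trans_eq
      (by rw [sq_mul_exp_eq_rpow (by positivity) ha2])) fun ω hω ↦ ?_
  simp only [Set.compl_iUnion, Set.mem_iInter, Set.mem_compl_iff, Set.mem_ofPred_eq,
    not_le, Prod.forall] at hω
  exact (frobNorm_mul_transpose_sub_le hM h01 hmeas hindep hmean hω).trans
    (sqrt_sq_mul_sq_add_le hn hT ha ha2 hTL)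

end BernoulliMatrix

/-- ASE concentration for the directed core-periphery SBM: with probability at
least `1 − 2N^{2 − (4/N²)T₁²}`, `‖AAᵀ − QQᵀ‖_F ≤ √3 T₁ √(N log N)`, and with probability at
least `1 − 2N^{2 − (4/N²)T₂²}`, `‖AᵀA − QᵀQ‖_F ≤ √3 T₂ √(N log N)`. -/
theorem stmt14 {N : ℕ}
    {Ω : Type*} [MeasurableSpace Ω] (μ : Measure Ω) [IsProbabilityMeasure μ]
    (G₁ : Finset (Fin N))
    (p q r s : ℝ) (hs0 : 0 ≤ s) (hsr : s < r) (hsq : s < q) (hrp : r < p) (hqp : q < p)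
    (hp1 : p ≤ 1)
    (Q : Matrix (Fin N) (Fin N) ℝ)
    (hQ : ∀ i j, Q i j =
      if i ∈ G₁ then (if j ∈ G₁ then p else q) else (if j ∈ G₁ then r else s))
    (A : Ω → Matrix (Fin N) (Fin N) ℝ)
    (h01 : ∀ ω i j, A ω i j = 0 ∨ A ω i j = 1)
    (hmeas : ∀ i j, Measurable fun ω => A ω i j)
    (hindep : iIndepFun
      (fun (p' : Fin N × Fin N) ω => A ω p'.1 p'.2) μ)
    (hBer : ∀ i j, μ {ω | A ω i j = 1} = ENNReal.ofReal (Q i j))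
    (T₁ T₂ : ℝ)
    (hT₁ : T₁ = (∑ _w ∈ G₁, (1 - r ^ 2)) + ∑ _w ∈ G₁ᶜ, (1 - s ^ 2))
    (hT₂ : T₂ = (∑ _w ∈ G₁, (1 - q ^ 2)) + ∑ _w ∈ G₁ᶜ, (1 - s ^ 2)) :
    ENNReal.ofReal (1 - 2 * (N : ℝ) ^ ((2 : ℝ) - 4 / (N : ℝ) ^ 2 * T₁ ^ 2)) ≤
      μ {ω | frobNorm (A ω * (A ω)ᵀ - Q * Qᵀ) ≤
        Real.sqrt 3 * T₁ * Real.sqrt ((N : ℝ) * Real.log N)} ∧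
    ENNReal.ofReal (1 - 2 * (N : ℝ) ^ ((2 : ℝ) - 4 / (N : ℝ) ^ 2 * T₂ ^ 2)) ≤
      μ {ω | frobNorm ((A ω)ᵀ * A ω - Qᵀ * Q) ≤
        Real.sqrt 3 * T₂ * Real.sqrt ((N : ℝ) * Real.log N)} := by
  have hQ01 : ∀ i j, Q i j ∈ Set.Icc (0 : ℝ) 1 := by
    intro i j
    rw [hQ]
    split_ifs <;> constructor <;> linarith
  have hr1 : r < 1 := hrp.trans_le hp1
  have hq1 : q < 1 := hqp.trans_le hp1
  have hT₁0 : 0 ≤ T₁ := by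
    rw [hT₁]
    exact add_nonneg (sum_nonneg fun _ _ ↦ by nlinarith) (sum_nonneg fun _ _ ↦ by nlinarith)
  have hT₂0 : 0 ≤ T₂ := by
    rw [hT₂]
    exact add_nonneg (sum_nonneg fun _ _ ↦ by nlinarith) (sum_nonneg fun _ _ ↦ by nlinarith)
  refine ⟨ofReal_one_sub_le_measure_frobNorm_mul_transpose_sub_le hQ01 h01 hmeas hindep hBer
    hT₁0, ?_⟩
  simpa using ofReal_one_sub_le_measure_frobNorm_mul_transpose_sub_le (A := fun ω ↦ (A ω)ᵀ)
    (M := Qᵀ) (fun i j ↦ hQ01 j i) (fun ω i j ↦ h01 ω j i) (fun i j ↦ hmeas j i)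
    (hindep.precomp (Equiv.prodComm _ _).injective) (fun i j ↦ hBer j i) hT₂0
end
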